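/- arXiv:1407.3286 — 6 statements merged into one kernel-verified Lean document; each statement's English description precedes it below -/
import Mathlib

section
/- Let A be an algorithm and let Ã = 𝔉_SoS(A) be its Stall-on-Suspect transformation. If R̃ = ⟨F, H, I, Φ̃, T̃⟩ is a valid run of Ã using the Marabout failure detector ℳ, and Φ and T are obtained from Φ̃ and T̃ by deleting every entry corresponding to a step taken by a process in faulty(F), then R = ⟨F, H, I, Φ, T⟩ is a valid run of A using ℳ in which no process of faulty(F) takes a step. -/
/-!
Under `ℳ` every live process is told exactly `faulty(F)`. A correct process therefore never
suspects itself and `Ã` behaves at it exactly as `A`, while a faulty process suspects itself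
already at its first step, moves to a stall state and from then on neither sends nor receives.
Deleting the faulty steps thus removes no message that a remaining step receives, and every
other requirement of a valid run is inherited along the order-preserving reindexing.
-/

namespace FDT

open Classical

/-- A failure pattern: a monotone assignment of crashed sets to times. -/
structure FailurePattern (Proc : Type) where
  F : ℕ → Set Proc
  mono : ∀ t, F t ⊆ F (t + 1)

variable {Proc State Msg PState : Type}

/-- The set of processes live at time `t`. -/
def live (F : FailurePattern Proc) (t : ℕ) : Set Proc := (F.F t)ᶜ

/-- The set of correct processes: those that are always live. -/
def correctS (F : FailurePattern Proc) : Set Proc := {p | ∀ t, p ∉ F.F t}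

/-- The set of faulty processes. -/
def faultyS (F : FailurePattern Proc) : Set Proc := (correctS F)ᶜ

/-- Marabout failure detector: every live process always sees exactly the faulty set. -/
def Marabout (F : FailurePattern Proc) : Set (Proc → ℕ → Set Proc) :=
  {H | ∀ t : ℕ, ∀ p ∉ F.F t, H p t = faultyS F}

/-- The perfect failure detector: strong completeness and strong accuracy. -/
def Perfect (F : FailurePattern Proc) : Set (Proc → ℕ → Set Proc) :=
  {H | (∀ q ∈ faultyS F, ∀ p ∈ correctS F, ∃ t', ∀ t > t', q ∈ H p t) ∧
       (∀ t : ℕ, ∀ p ∉ F.F t, ∀ q, q ∉ F.F t → q ∉ H p t)}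

/-- The failure detector `𝒫_k`: k-completeness and k-accuracy. -/
def Pk (k : ℕ) (F : FailurePattern Proc) : Set (Proc → ℕ → Set Proc) :=
  {H | (∀ p q : Proc, q ∉ F.F k → q ∈ faultyS F → p ∈ correctS F →
          ∃ t', ∀ t > t', q ∈ H p t) ∧
       (∀ (p q : Proc) (t : ℕ), q ∉ F.F k → q ∉ F.F t → q ∉ H p t)}

/-- `F` is an initial crash scenario: all faulty processes crash at time 0. -/
def IsInitialCrashScenario (F : FailurePattern Proc) : Prop :=
  ∀ t, F.F t = faultyS F

/-- The initial crash scenario `F⁰` associated with `F`. -/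
def initialScenario (F : FailurePattern Proc) : FailurePattern Proc :=
  ⟨fun _ => faultyS F, fun _ => subset_rfl⟩

/-- The shifted failure pattern `t ↦ F(t+1)`. -/
def shiftPattern (F : FailurePattern Proc) : FailurePattern Proc :=
  ⟨fun t => F.F (t + 1), fun t => F.mono (t + 1)⟩

/-- A step `(p, s, m, d, s', m')` of process `p`. -/
structure Step (Proc State Msg : Type) where
  proc : Proc
  st : State
  recv : Option (Proc × Msg)
  fd : Set Proc
  st' : State
  send : Option (Proc × Msg)

/-- An algorithm: state sets, nonempty initial state sets, and a deterministic
transition relation given as the set of allowed steps. -/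
structure Algorithm (Proc State Msg : Type) where
  Q : Proc → Set State
  init : Proc → Set State
  init_sub : ∀ p, init p ⊆ Q p
  init_nonempty : ∀ p, (init p).Nonempty
  allowed : Set (Step Proc State Msg)
  allowed_st : ∀ s ∈ allowed, s.st ∈ Q s.proc ∧ s.st' ∈ Q s.proc
  det : ∀ s ∈ allowed, ∀ s' ∈ allowed,
    s.proc = s'.proc → s.st = s'.st → s.recv = s'.recv → s.fd = s'.fd →
    s.st' = s'.st' ∧ s.send = s'.send

/-- `R = ⟨F, H, I, Φ, T⟩` is a valid run of algorithm `A` using failure detector `D`. -/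
def ValidRun (A : Algorithm Proc State Msg)
    (D : FailurePattern Proc → Set (Proc → ℕ → Set Proc))
    (F : FailurePattern Proc) (H : Proc → ℕ → Set Proc) (I : Proc → State)
    (Φ : ℕ → Step Proc State Msg) (T : ℕ → ℕ) : Prop :=
  -- the time sequence is strictly increasing
  StrictMono T ∧
  -- the history belongs to the detector
  H ∈ D F ∧
  -- the initial configuration is made of initial states
  (∀ p, I p ∈ A.init p) ∧
  -- correct processes take infinitely many steps
  (∀ p ∈ correctS F, ∀ n : ℕ, ∃ ℓ ≥ n, (Φ ℓ).proc = p) ∧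
  -- all steps are allowed by the algorithm
  (∀ ℓ, Φ ℓ ∈ A.allowed) ∧
  -- a process taking a step is live at that time
  (∀ ℓ, (Φ ℓ).proc ∉ F.F (T ℓ)) ∧
  -- the failure detector output is the history value at that time
  (∀ ℓ, (Φ ℓ).fd = H (Φ ℓ).proc (T ℓ)) ∧
  -- no spurious messages
  (∀ ℓ q m, (Φ ℓ).recv = some (q, m) →
     ∃ k < ℓ, (Φ k).proc = q ∧ (Φ k).send = some ((Φ ℓ).proc, m)) ∧
  -- reliable links: each sent message received at most once; exactly once at correct processes
  (∀ ℓ q m, (Φ ℓ).send = some (q, m) →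
     (∀ k k', ℓ < k → ℓ < k' → (Φ k).proc = q → (Φ k).recv = some ((Φ ℓ).proc, m) →
        (Φ k').proc = q → (Φ k').recv = some ((Φ ℓ).proc, m) → k = k') ∧
     (q ∈ correctS F → ∃ k > ℓ, (Φ k).proc = q ∧ (Φ k).recv = some ((Φ ℓ).proc, m))) ∧
  -- the first step of a process starts in its initial state
  (∀ ℓ, (∀ k < ℓ, (Φ k).proc ≠ (Φ ℓ).proc) → (Φ ℓ).st = I (Φ ℓ).proc) ∧
  -- the state does not change between consecutive steps of a process
  (∀ ℓ k, ℓ < k → (Φ k).proc = (Φ ℓ).proc →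
     (∀ j, ℓ < j → j < k → (Φ j).proc ≠ (Φ ℓ).proc) → (Φ k).st = (Φ ℓ).st')

/-- `γ(I,Φ,ℓ)`: the configuration (process states) after the first `ℓ` steps of `Φ`. -/
noncomputable def configAt (I : Proc → State) (Φ : ℕ → Step Proc State Msg) :
    ℕ → Proc → State
  | 0 => I
  | (ℓ + 1) => fun p =>
      if (Φ ℓ).proc = p then (Φ ℓ).st' else configAt I Φ ℓ p

/-- `γ_i(I,Φ,ℓ)`: the state of process `p` after its first `ℓ` own steps in `Φ`
(constant once `p` takes no more steps). -/
noncomputable def procStateAfter (I : Proc → State) (Φ : ℕ → Step Proc State Msg)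
    (p : Proc) : ℕ → State
  | 0 => I p
  | (ℓ + 1) =>
      if h : ∃ k, (Φ k).proc = p ∧ {j | j < k ∧ (Φ j).proc = p}.ncard = ℓ
      then (Φ h.choose).st'
      else procStateAfter I Φ p ℓ

/-- `Φ, T` are obtained from `Φt, Tt` by deleting exactly the entries whose
process lies in `bad`. -/
def IsDeletion (bad : Set Proc) (Φt : ℕ → Step Proc State Msg) (Tt : ℕ → ℕ)
    (Φ : ℕ → Step Proc State Msg) (T : ℕ → ℕ) : Prop :=
  ∃ e : ℕ → ℕ, StrictMono e ∧
    (∀ ℓ, (Φt (e ℓ)).proc ∉ bad) ∧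
    (∀ n, (Φt n).proc ∉ bad → ∃ ℓ, e ℓ = n) ∧
    (∀ ℓ, Φ ℓ = Φt (e ℓ)) ∧ (∀ ℓ, T ℓ = Tt (e ℓ))

/-- Index `n` is the first step of its process in schedule `Φ`. -/
def IsFirstStep (Φ : ℕ → Step Proc State Msg) (n : ℕ) : Prop :=
  ∀ j < n, (Φ j).proc ≠ (Φ n).proc

/-- `Φ, T` are obtained from `Φt, Tt` by deleting, for each process, the entry of its
first step. -/
def IsFirstStepDeletion (Φt : ℕ → Step Proc State Msg) (Tt : ℕ → ℕ)
    (Φ : ℕ → Step Proc State Msg) (T : ℕ → ℕ) : Prop :=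
  ∃ e : ℕ → ℕ, StrictMono e ∧
    (∀ ℓ, ¬ IsFirstStep Φt (e ℓ)) ∧
    (∀ n, ¬ IsFirstStep Φt n → ∃ ℓ, e ℓ = n) ∧
    (∀ ℓ, Φ ℓ = Φt (e ℓ)) ∧ (∀ ℓ, T ℓ = Tt (e ℓ))

/-- Data for the Stall-on-Suspect transformation of `A`: the fresh stall states
`S†_i` (disjoint from `Q_i`) together with the bijections `stall_i : Q̂_i → S†_i`. -/
structure SoSData (A : Algorithm Proc State Msg) where
  Sd : Proc → Set State
  disj : ∀ p, Disjoint (Sd p) (A.Q p)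
  stall : Proc → State → State
  stall_maps : ∀ p, ∀ q ∈ A.init p, stall p q ∈ Sd p
  stall_inj : ∀ p, Set.InjOn (stall p) (A.init p)
  stall_surj : ∀ p, Sd p ⊆ stall p '' (A.init p)

/-- The Stall-on-Suspect transformation `Ã = 𝔉_SoS(A)`. -/
def SoSAlg (A : Algorithm Proc State Msg) (D : SoSData A) :
    Algorithm Proc State Msg where
  Q p := A.Q p ∪ D.Sd p
  init := A.init
  init_sub p := (A.init_sub p).trans Set.subset_union_left
  init_nonempty := A.init_nonempty
  allowed := {s | (s ∈ A.allowed ∧ ¬(s.st ∈ A.init s.proc ∧ s.proc ∈ s.fd)) ∨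
      (s.st ∈ A.init s.proc ∧ s.proc ∈ s.fd ∧ s.st' = D.stall s.proc s.st ∧
        s.recv = none ∧ s.send = none) ∨
      (s.st ∈ D.Sd s.proc ∧ s.st' = s.st ∧ s.recv = none ∧ s.send = none)}
  allowed_st := by
    rintro s (⟨hA, -⟩ | ⟨h1, h2, h3, -⟩ | ⟨h1, h2, -⟩)
    · exact ⟨Set.mem_union_left _ (A.allowed_st s hA).1,
        Set.mem_union_left _ (A.allowed_st s hA).2⟩
    · exact ⟨Set.mem_union_left _ (A.init_sub _ h1),
        Set.mem_union_right _ (h3 ▸ D.stall_maps _ _ h1)⟩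
    · exact ⟨Set.mem_union_right _ h1, Set.mem_union_right _ (h2 ▸ h1)⟩
  det := by
    rintro s hs s' hs' hproc hst hrecv hfd
    rcases hs with ⟨hA, hn⟩ | ⟨h1, h2, h3, h4, h5⟩ | ⟨h1, h2, h3, h4⟩ <;>
      rcases hs' with ⟨hA', hn'⟩ | ⟨h1', h2', h3', h4', h5'⟩ | ⟨h1', h2', h3', h4'⟩
    · exact A.det s hA s' hA' hproc hst hrecv hfd
    · exact absurd ⟨by rw [hproc, hst]; exact h1', by rw [hproc, hfd]; exact h2'⟩ hn
    · exact absurd ((A.allowed_st s hA).1)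
        (Set.disjoint_left.mp (D.disj s.proc) (by rw [hproc, hst]; exact h1'))
    · exact absurd ⟨by rw [← hproc, ← hst]; exact h1, by rw [← hproc, ← hfd]; exact h2⟩ hn'
    · refine ⟨?_, by rw [h5, h5']⟩
      rw [h3, h3', hproc, hst]
    · exact absurd (A.init_sub _ h1)
        (Set.disjoint_left.mp (D.disj s.proc) (by rw [hproc, hst]; exact h1'))
    · exact absurd ((A.allowed_st s' hA').1)
        (Set.disjoint_left.mp (D.disj s'.proc) (by rw [← hproc, ← hst]; exact h1))
    · exact absurd (A.init_sub _ h1')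
        (Set.disjoint_left.mp (D.disj s'.proc) (by rw [← hproc, ← hst]; exact h1))
    · exact ⟨by rw [h2, h2', hst], by rw [h4, h4']⟩

/-- Data for the Delay-a-Step transformation of `A`: fresh initial states `S⋆_i`
(disjoint from `Q_i`) together with the bijections `delay_i : S⋆_i → Q̂_i`. -/
structure DaSData (A : Algorithm Proc State Msg) where
  Ss : Proc → Set State
  disj : ∀ p, Disjoint (Ss p) (A.Q p)
  delay : Proc → State → State
  delay_maps : ∀ p, ∀ s ∈ Ss p, delay p s ∈ A.init p
  delay_inj : ∀ p, Set.InjOn (delay p) (Ss p)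
  delay_surj : ∀ p, A.init p ⊆ delay p '' (Ss p)

/-- The Delay-a-Step transformation `Ã = 𝔉_DaS(A)`. -/
def DaSAlg (A : Algorithm Proc State Msg) (D : DaSData A) :
    Algorithm Proc State Msg where
  Q p := A.Q p ∪ D.Ss p
  init p := D.Ss p
  init_sub p := Set.subset_union_right
  init_nonempty p := by
    obtain ⟨q, hq⟩ := A.init_nonempty p
    obtain ⟨s, hs, -⟩ := D.delay_surj p hq
    exact ⟨s, hs⟩
  allowed := {s | s ∈ A.allowed ∨
      (s.st ∈ D.Ss s.proc ∧ s.st' = D.delay s.proc s.st ∧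
        s.recv = none ∧ s.send = none)}
  allowed_st := by
    rintro s (hA | ⟨h1, h2, -⟩)
    · exact ⟨Set.mem_union_left _ (A.allowed_st s hA).1,
        Set.mem_union_left _ (A.allowed_st s hA).2⟩
    · exact ⟨Set.mem_union_right _ h1,
        Set.mem_union_left _ (A.init_sub _ (h2 ▸ D.delay_maps _ _ h1))⟩
  det := by
    rintro s hs s' hs' hproc hst hrecv hfd
    rcases hs with hA | ⟨h1, h2, h3, h4⟩ <;> rcases hs' with hA' | ⟨h1', h2', h3', h4'⟩
    · exact A.det s hA s' hA' hproc hst hrecv hfd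
    · exact absurd ((A.allowed_st s hA).1)
        (Set.disjoint_left.mp (D.disj s.proc) (by rw [hproc, hst]; exact h1'))
    · exact absurd ((A.allowed_st s' hA').1)
        (Set.disjoint_left.mp (D.disj s'.proc) (by rw [← hproc, ← hst]; exact h1))
    · exact ⟨by rw [h2, h2', hproc, hst], by rw [h4, h4']⟩

/-- One stuttering insertion: `w'` is obtained from `w` by inserting between the
`n`-th and `(n+1)`-st configurations a configuration agreeing componentwise with
one of the two. -/
def Stutter1 (w w' : ℕ → Proc → PState) : Prop :=
  ∃ n : ℕ, (∀ k ≤ n, w' k = w k) ∧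
    (∀ p, w' (n + 1) p = w n p ∨ w' (n + 1) p = w (n + 1) p) ∧
    (∀ k, n < k → w' (k + 1) = w k)

/-- `w ⊑ w'`: `w'` is obtained from `w` by finitely many stuttering insertions. -/
def Stutter (w w' : ℕ → Proc → PState) : Prop :=
  Relation.ReflTransGen Stutter1 w w'

/-- A time-free problem: a predicate on problem-configuration sequences and
failure patterns, satisfying crash time independence and finite stuttering. -/
structure TimeFreeProblem (Proc PState : Type) (initP : Set PState) where
  pred : (ℕ → Proc → PState) → FailurePattern Proc → Prop
  crashIndep : ∀ (w : ℕ → Proc → PState) (F F' : FailurePattern Proc),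
    (∀ p, w 0 p ∈ initP) → correctS F = correctS F' → (pred w F ↔ pred w F')
  stutterInv : ∀ (w w' : ℕ → Proc → PState) (F : FailurePattern Proc),
    (∀ p, w 0 p ∈ initP) → Stutter w w' → (pred w F ↔ pred w' F)

/-- `V` is an interpretation of the states of `A`: each `V_i` maps `Q_i` onto the
problem states, and `Q̂_i` onto the initial problem states `initP`. -/
def IsInterp (A : Algorithm Proc State Msg) (initP : Set PState)
    (V : Proc → State → PState) : Prop :=
  (∀ p, V p '' A.Q p = Set.univ) ∧ (∀ p, V p '' A.init p = initP)

/-- The interpreted run of a run with initial configuration `I` and schedule `Φ`. -/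
noncomputable def interpRun (V : Proc → State → PState) (I : Proc → State)
    (Φ : ℕ → Step Proc State Msg) : ℕ → Proc → PState :=
  fun ℓ p => V p (configAt I Φ ℓ p)

/-- Algorithm `A` solves problem `P` using failure detector `D`. -/
noncomputable def Solves (A : Algorithm Proc State Msg)
    (D : FailurePattern Proc → Set (Proc → ℕ → Set Proc))
    (P : (ℕ → Proc → PState) → FailurePattern Proc → Prop)
    (initP : Set PState) : Prop :=
  ∃ V : Proc → State → PState, IsInterp A initP V ∧
    ∀ (F : FailurePattern Proc) (H : Proc → ℕ → Set Proc) (I : Proc → State)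
      (Φ : ℕ → Step Proc State Msg) (T : ℕ → ℕ),
      ValidRun A D F H I Φ T → P (interpRun V I Φ) F

/-- Problem `P` is solvable using failure detector `D`. -/
noncomputable def SolvableWith (Proc : Type) {PState : Type}
    (D : FailurePattern Proc → Set (Proc → ℕ → Set Proc))
    (P : (ℕ → Proc → PState) → FailurePattern Proc → Prop)
    (initP : Set PState) : Prop :=
  ∃ (State Msg : Type) (A : Algorithm Proc State Msg), Solves A D P initP

/-- Problem states of strong consensus: an input value in `{0,1}` and a decision
in `{⊥,0,1}`. -/
abbrev SCState : Type := Bool × Option Bool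

/-- Initial problem states of strong consensus: no decision yet. -/
def SCinit : Set SCState := {s | s.2 = none}

/-- The strong-consensus predicate: inputs never change, decisions change at most
once and only from `⊥`, and all correct processes eventually forever decide the
input value of a single correct process (when a correct process exists). -/
def SCpred (w : ℕ → Proc → SCState) (F : FailurePattern Proc) : Prop :=
  (∀ (p : Proc) (ℓ : ℕ), (w ℓ p).1 = (w 0 p).1) ∧
  (∀ (p : Proc) (ℓ : ℕ), (w ℓ p).2 ≠ none → (w (ℓ + 1) p).2 = (w ℓ p).2) ∧
  ((correctS F).Nonempty →
    ∃ j ∈ correctS F, ∀ i ∈ correctS F, ∃ N, ∀ ℓ ≥ N, (w ℓ i).2 = some (w 0 j).1)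

namespace ValidRun

variable {A : Algorithm Proc State Msg} {D : FailurePattern Proc → Set (Proc → ℕ → Set Proc)}
  {F : FailurePattern Proc} {H : Proc → ℕ → Set Proc} {I : Proc → State}
  {Φ : ℕ → Step Proc State Msg} {T : ℕ → ℕ}

theorem st_eq_configAt_of_le (hrun : ValidRun A D F H I Φ T) {ℓ n : ℕ} (hn : n ≤ ℓ)
    (hidle : ∀ j, n ≤ j → j < ℓ → (Φ j).proc ≠ (Φ ℓ).proc) :
    (Φ ℓ).st = configAt I Φ n (Φ ℓ).proc := by
  obtain ⟨-, -, -, -, -, -, -, -, -, hfirst, hcont⟩ := hrun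
  induction n with
  | zero => exact hfirst ℓ fun k hk => hidle k k.zero_le hk
  | succ n ih =>
    by_cases hproc : (Φ n).proc = (Φ ℓ).proc
    · simp only [configAt, if_pos hproc]
      exact hcont n ℓ hn hproc.symm fun j hnj hjℓ hj =>
        hidle j hnj hjℓ (hj.trans hproc)
    · simp only [configAt, if_neg hproc]
      exact ih (by omega) fun j hnj hjℓ => by
        rcases hnj.lt_or_eq with hnj | rfl
        exacts [hidle j hnj hjℓ, hproc]

theorem st_eq_configAt (hrun : ValidRun A D F H I Φ T) (ℓ : ℕ) :
    (Φ ℓ).st = configAt I Φ ℓ (Φ ℓ).proc :=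
  hrun.st_eq_configAt_of_le le_rfl fun _ hℓj hjℓ => absurd hjℓ (not_lt.mpr hℓj)

theorem forall_st_of_invariant (hrun : ValidRun A D F H I Φ T) {P : Proc → State → Prop}
    (hinit : ∀ p, P p (I p))
    (hstep : ∀ ℓ, P (Φ ℓ).proc (Φ ℓ).st → P (Φ ℓ).proc (Φ ℓ).st') (ℓ : ℕ) :
    P (Φ ℓ).proc (Φ ℓ).st := by
  have hconfig : ∀ n p, P p (configAt I Φ n p) := by
    intro n
    induction n with
    | zero => exact hinit
    | succ n ih =>
      intro p
      simp only [configAt]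
      split_ifs with hproc
      · subst hproc
        exact hstep n (hrun.st_eq_configAt n ▸ ih _)
      · exact ih p
  exact hrun.st_eq_configAt ℓ ▸ hconfig ℓ _

theorem fd_eq_faultyS (hrun : ValidRun A Marabout F H I Φ T) (ℓ : ℕ) :
    (Φ ℓ).fd = faultyS F := by
  obtain ⟨-, hH, -, -, -, hlive, hfd, -⟩ := hrun
  exact (hfd ℓ).trans (hH _ _ (hlive ℓ))

end ValidRun

namespace SoSAlg

variable {A : Algorithm Proc State Msg} {D : SoSData A} {s : Step Proc State Msg}

theorem mem_allowed_of_notMem_fd (hs : s ∈ (SoSAlg A D).allowed) (hQ : s.st ∈ A.Q s.proc)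
    (hfd : s.proc ∉ s.fd) : s ∈ A.allowed := by
  rcases hs with ⟨hA, -⟩ | ⟨-, hmem, -⟩ | ⟨hstall, -⟩
  · exact hA
  · exact absurd hmem hfd
  · exact absurd hQ (Set.disjoint_left.mp (D.disj _) hstall)

theorem stall_of_mem_fd (hs : s ∈ (SoSAlg A D).allowed)
    (hst : s.st ∈ A.init s.proc ∪ D.Sd s.proc) (hfd : s.proc ∈ s.fd) :
    s.st' ∈ D.Sd s.proc ∧ s.send = none := by
  rcases hs with ⟨hA, hsuspect⟩ | ⟨hinit, -, hst', -, hsend⟩ | ⟨hstall, hst', -, hsend⟩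
  · have hstall : s.st ∉ D.Sd s.proc :=
      Set.disjoint_right.mp (D.disj _) (A.allowed_st s hA).1
    exact absurd ⟨hst.resolve_right hstall, hfd⟩ hsuspect
  · exact ⟨hst' ▸ D.stall_maps _ _ hinit, hsend⟩
  · exact ⟨hst' ▸ hstall, hsend⟩

variable {F : FailurePattern Proc} {H : Proc → ℕ → Set Proc} {I : Proc → State}
  {Φ : ℕ → Step Proc State Msg} {T : ℕ → ℕ}

/-- Under `ℳ` a correct process never suspects itself, so it runs `A` unchanged. -/
theorem mem_allowed_of_correct (hrun : ValidRun (SoSAlg A D) Marabout F H I Φ T) (ℓ : ℕ)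
    (hcorrect : (Φ ℓ).proc ∉ faultyS F) : Φ ℓ ∈ A.allowed := by
  have ⟨_, _, hI, _, hallowed, _⟩ := hrun
  have hsuspect ℓ (hcorrect : (Φ ℓ).proc ∉ faultyS F) : (Φ ℓ).proc ∉ (Φ ℓ).fd :=
    hrun.fd_eq_faultyS ℓ ▸ hcorrect
  have hQ : (Φ ℓ).st ∈ A.Q (Φ ℓ).proc := by
    refine hrun.forall_st_of_invariant (P := fun p s => p ∉ faultyS F → s ∈ A.Q p)
      (fun p _ => A.init_sub p (hI p)) (fun k hk hk_correct => ?_) ℓ hcorrect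
    exact (A.allowed_st _ (mem_allowed_of_notMem_fd (hallowed k) (hk hk_correct)
      (hsuspect k hk_correct))).2
  exact mem_allowed_of_notMem_fd (hallowed ℓ) hQ (hsuspect ℓ hcorrect)

/-- Under `ℳ` a faulty process suspects itself from its first step on, so it stalls. -/
theorem send_eq_none_of_faulty (hrun : ValidRun (SoSAlg A D) Marabout F H I Φ T) (ℓ : ℕ)
    (hfaulty : (Φ ℓ).proc ∈ faultyS F) : (Φ ℓ).send = none := by
  have ⟨_, _, hI, _, hallowed, _⟩ := hrun
  have hsuspect ℓ (hfaulty : (Φ ℓ).proc ∈ faultyS F) : (Φ ℓ).proc ∈ (Φ ℓ).fd :=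
    hrun.fd_eq_faultyS ℓ ▸ hfaulty
  have hst : (Φ ℓ).st ∈ A.init (Φ ℓ).proc ∪ D.Sd (Φ ℓ).proc := by
    refine hrun.forall_st_of_invariant
      (P := fun p s => p ∈ faultyS F → s ∈ A.init p ∪ D.Sd p)
      (fun p _ => Or.inl (hI p)) (fun k hk hk_faulty => ?_) ℓ hfaulty
    exact Or.inr (stall_of_mem_fd (hallowed k) (hk hk_faulty) (hsuspect k hk_faulty)).1
  exact (stall_of_mem_fd (hallowed ℓ) hst (hsuspect ℓ hfaulty)).2

end SoSAlg

/-- As the deleted steps send nothing, no surviving step receives a message from a deleted one. -/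
theorem ValidRun.of_isDeletion {A A' : Algorithm Proc State Msg}
    {D : FailurePattern Proc → Set (Proc → ℕ → Set Proc)} {F : FailurePattern Proc}
    {H : Proc → ℕ → Set Proc} {I : Proc → State} {Φt Φ : ℕ → Step Proc State Msg}
    {Tt T : ℕ → ℕ} {bad : Set Proc}
    (hrun : ValidRun A' D F H I Φt Tt) (hdel : IsDeletion bad Φt Tt Φ T)
    (hbad : bad ⊆ faultyS F) (hI : ∀ p, I p ∈ A.init p)
    (hallowed : ∀ n, (Φt n).proc ∉ bad → Φt n ∈ A.allowed)
    (hsend : ∀ n, (Φt n).proc ∈ bad → (Φt n).send = none) :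
    ValidRun A D F H I Φ T := by
  obtain ⟨hT, hH, -, hinf, -, hlive, hfd, hspur, hrel, hfirst, hcont⟩ := hrun
  obtain ⟨e, he, hgood, hcover, hΦ, hTe⟩ := hdel
  obtain rfl : Φ = Φt ∘ e := funext hΦ
  obtain rfl : T = Tt ∘ e := funext hTe
  have hcorrect : ∀ p ∈ correctS F, p ∉ bad := fun p hp hb => hbad hb hp
  refine ⟨hT.comp he, hH, hI, ?_, fun ℓ => hallowed _ (hgood ℓ), fun ℓ => hlive _,
    fun ℓ => hfd _, ?_, ?_, ?_, ?_⟩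
  · intro p hp n
    obtain ⟨m, hm, rfl⟩ := hinf p hp (e n)
    obtain ⟨ℓ, rfl⟩ := hcover m (hcorrect _ hp)
    exact ⟨ℓ, he.le_iff_le.mp hm, rfl⟩
  · intro ℓ q m hr
    obtain ⟨k, hk, rfl, hks⟩ := hspur _ q m hr
    obtain ⟨j, rfl⟩ := hcover k fun hb => Option.some_ne_none _ (hks.symm.trans (hsend k hb))
    exact ⟨j, he.lt_iff_lt.mp hk, rfl, hks⟩
  · intro ℓ q m hs
    obtain ⟨huniq, hdeliver⟩ := hrel _ q m hs
    refine ⟨fun k k' hk hk' hkp hkr hk'p hk'r =>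
      he.injective (huniq _ _ (he hk) (he hk') hkp hkr hk'p hk'r), fun hq => ?_⟩
    obtain ⟨k, hk, hkp, hkr⟩ := hdeliver hq
    obtain ⟨j, rfl⟩ := hcover k (hkp ▸ hcorrect q hq)
    exact ⟨j, he.lt_iff_lt.mp hk, hkp, hkr⟩
  · intro ℓ hfirstℓ
    refine hfirst _ fun k hk hkp => ?_
    obtain ⟨j, rfl⟩ := hcover k (hkp ▸ hgood ℓ)
    exact hfirstℓ j (he.lt_iff_lt.mp hk) hkp
  · intro ℓ k hℓk hkp hidle
    refine hcont _ _ (he hℓk) hkp fun j hℓj hjk hjp => ?_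
    obtain ⟨i, rfl⟩ := hcover j (hjp ▸ hgood ℓ)
    exact hidle i (he.lt_iff_lt.mp hℓj) (he.lt_iff_lt.mp hjk) hjp

theorem stall_on_suspect_run_valid_general {Proc State Msg : Type}
    (A : Algorithm Proc State Msg) (D : SoSData A)
    (F : FailurePattern Proc) (H : Proc → ℕ → Set Proc) (I : Proc → State)
    (Φt Φ : ℕ → Step Proc State Msg) (Tt T : ℕ → ℕ)
    (hrun : ValidRun (SoSAlg A D) Marabout F H I Φt Tt)
    (hdel : IsDeletion (faultyS F) Φt Tt Φ T) :
    ValidRun A Marabout F H I Φ T ∧ ∀ ℓ, (Φ ℓ).proc ∉ faultyS F := by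
  have ⟨_, _, hI, _⟩ := hrun
  refine ⟨hrun.of_isDeletion hdel subset_rfl hI (SoSAlg.mem_allowed_of_correct hrun)
    (SoSAlg.send_eq_none_of_faulty hrun), ?_⟩
  obtain ⟨e, -, hcorrect, -, hΦ, -⟩ := hdel
  exact fun ℓ => hΦ ℓ ▸ hcorrect ℓ

/-- If `R̃ = ⟨F,H,I,Φ̃,T̃⟩` is a valid run of `Ã = 𝔉_SoS(A)` using the
Marabout detector `ℳ`, and `Φ, T` are obtained from `Φ̃, T̃` by deleting every entry of a
process in `faulty(F)`, then `R = ⟨F,H,I,Φ,T⟩` is a valid run of `A` using `ℳ` in which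
no faulty process takes a step. -/
theorem stall_on_suspect_run_valid {Proc State Msg : Type} [Fintype Proc] [Nonempty Proc]
    (A : Algorithm Proc State Msg) (D : SoSData A)
    (F : FailurePattern Proc) (H : Proc → ℕ → Set Proc) (I : Proc → State)
    (Φt Φ : ℕ → Step Proc State Msg) (Tt T : ℕ → ℕ)
    (hrun : ValidRun (SoSAlg A D) Marabout F H I Φt Tt)
    (hdel : IsDeletion (faultyS F) Φt Tt Φ T) :
    ValidRun A Marabout F H I Φ T ∧ ∀ ℓ, (Φ ℓ).proc ∉ faultyS F :=
  stall_on_suspect_run_valid_general A D F H I Φt Φ Tt T hrun hdel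

end FDT
end

section
/- If R = ⟨F, H, I, Φ, T⟩ is a valid run of algorithm A using the Marabout failure detector ℳ in which no process of faulty(F) takes a step, then R⁰ = ⟨F⁰, H, I, Φ, T⟩ is a valid run of A using ℳ, where F⁰ is the initial crash scenario of F. -/
namespace FDT

open Classical

variable {Proc State Msg PState : Type}

/-- If `R = ⟨F,H,I,Φ,T⟩` is a valid run of `A` using the Marabout
detector `ℳ` in which no process of `faulty(F)` takes a step, then
`R⁰ = ⟨F⁰,H,I,Φ,T⟩` is a valid run of `A` using `ℳ`, where `F⁰` is the initial crash
scenario of `F`. -/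
theorem run_valid_with_initial_scenario {Proc State Msg : Type} [Fintype Proc] [Nonempty Proc]
    (A : Algorithm Proc State Msg)
    (F : FailurePattern Proc) (H : Proc → ℕ → Set Proc) (I : Proc → State)
    (Φ : ℕ → Step Proc State Msg) (T : ℕ → ℕ)
    (hrun : ValidRun A Marabout F H I Φ T)
    (hnf : ∀ ℓ, (Φ ℓ).proc ∉ faultyS F) :
    ValidRun A Marabout (initialScenario F) H I Φ T := by
  have hcorr : correctS (initialScenario F) = correctS F := by
    ext p
    simp only [correctS, initialScenario, faultyS, Set.mem_setOf_eq, Set.mem_compl_iff]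
    constructor
    · intro h t
      have := h 0
      simp only [correctS, Set.mem_setOf_eq, not_not] at this
      exact this t
    · intro h t
      simp only [correctS, Set.mem_setOf_eq, not_not]
      exact h
  have hfault : faultyS (initialScenario F) = faultyS F := by
    simp [faultyS, hcorr]
  obtain ⟨h1, h2, h3, h4, h5, h6, h7, h8, h9, h10, h11⟩ := hrun
  refine ⟨h1, ?_, h3, ?_, h5, ?_, h7, h8, ?_, h10, h11⟩
  · intro t p hp
    have hpc : p ∈ correctS F := by
      simpa [initialScenario, faultyS] using hp
    have : p ∉ F.F t := hpc t
    rw [h2 t p this, hfault]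
  · intro p hp n
    exact h4 p (hcorr ▸ hp) n
  · intro ℓ
    simpa [initialScenario] using hnf ℓ
  · intro ℓ q m hm
    refine ⟨(h9 ℓ q m hm).1, fun hq => (h9 ℓ q m hm).2 (hcorr ▸ hq)⟩

end FDT
end

section
/- If R⁰ = ⟨F⁰, H, I, Φ, T⟩ is a valid run of algorithm A using the Marabout failure detector ℳ, where F⁰ is the initial crash scenario of some failure pattern F, then R⁰ is also a valid run of A using the perfect failure detector 𝒫. -/
namespace FDT

open Classical

variable {Proc State Msg PState : Type}

/-- If `R⁰ = ⟨F⁰,H,I,Φ,T⟩` is a valid run of `A` using the Marabout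
detector `ℳ`, where `F⁰` is the initial crash scenario of some failure pattern `F`, then
`R⁰` is also a valid run of `A` using the perfect detector `𝒫`. -/
theorem marabout_run_is_perfect_run {Proc State Msg : Type} [Fintype Proc] [Nonempty Proc]
    (A : Algorithm Proc State Msg)
    (F : FailurePattern Proc) (H : Proc → ℕ → Set Proc) (I : Proc → State)
    (Φ : ℕ → Step Proc State Msg) (T : ℕ → ℕ)
    (hrun : ValidRun A Marabout (initialScenario F) H I Φ T) :
    ValidRun A Perfect (initialScenario F) H I Φ T := by
  obtain ⟨h1, hM, h3, h4, h5, h6, h7, h8, h9, h10, h11⟩ := hrun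
  have hfe : faultyS (initialScenario F) = faultyS F := by
    have : correctS (initialScenario F) = (faultyS F)ᶜ := by
      ext p; simp [correctS, initialScenario, Set.mem_compl_iff]
    simp [faultyS, this]
  refine ⟨h1, ⟨?_, ?_⟩, h3, h4, h5, h6, h7, h8, h9, h10, h11⟩
  · intro q hq p hp
    have hpl : ∀ t, p ∉ (initialScenario F).F t := hp
    refine ⟨0, fun t _ => ?_⟩
    rw [hM t p (hpl t)]
    exact hq
  · intro t p hp q hq
    rw [hM t p hp, hfe]
    exact hq

end FDT
end

section
/- Let A be an algorithm, Ã = 𝔉_SoS(A), and (V_i) an interpretation for A; define (Ṽ_i) for Ã by Ṽ_i(s) = V_i(stall_i⁻¹(s)) for s ∈ S†_i and Ṽ_i(s) = V_i(s) for all other states s. Suppose R̃ = ⟨F, H, I, Φ̃, T̃⟩ is a valid run of Ã using the Marabout failure detector ℳ and R⁰ = ⟨F⁰, H, I, Φ, T⟩ is a valid run of A using the perfect failure detector 𝒫, where F⁰ is the initial crash scenario of F and Φ, T are obtained from Φ̃, T̃ by deleting every entry corresponding to a step of a process in faulty(F). Then for every process p_i ∈ correct(F) and every ℓ ≥ 0,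 Ṽ_i(γ_i(I, Φ̃, ℓ)) = V_i(γ_i(I, Φ, ℓ)). -/
namespace FDT

open Classical

variable {Proc State Msg PState : Type}

/-- Auxiliary: the index of a process step is determined by the number of earlier
steps of the same process. -/
private lemma ncard_step_unique {Proc State Msg : Type} (Ψ : ℕ → Step Proc State Msg)
    (p : Proc) {k k' : ℕ} (hk : (Ψ k).proc = p) (hk' : (Ψ k').proc = p)
    (h : {j | j < k ∧ (Ψ j).proc = p}.ncard = {j | j < k' ∧ (Ψ j).proc = p}.ncard) :
    k = k' := by
  by_contra hne
  wlog hlt : k < k' generalizing k k'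
  · exact this hk' hk h.symm (Ne.symm hne) (by omega)
  have h1 : {j | j < k ∧ (Ψ j).proc = p} ⊆ {j | j < k' ∧ (Ψ j).proc = p} :=
    fun j hj => ⟨hj.1.trans hlt, hj.2⟩
  have hss : {j | j < k ∧ (Ψ j).proc = p} ⊂ {j | j < k' ∧ (Ψ j).proc = p} :=
    (Set.ssubset_iff_of_subset h1).mpr ⟨k, ⟨hlt, hk⟩, fun hmem => lt_irrefl k hmem.1⟩
  have hfin : {j | j < k' ∧ (Ψ j).proc = p}.Finite :=
    (Set.finite_Iio k').subset (fun j hj => hj.1)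
  exact absurd h (Set.ncard_lt_ncard hss hfin).ne

/-- With `Ṽ` derived from interpretation `V` via the stall bijections,
for every correct process `p` and every `ℓ`, `Ṽ_p(γ_p(I,Φ̃,ℓ)) = V_p(γ_p(I,Φ,ℓ))`. -/
theorem sos_interp_eq_of_correct {Proc State Msg PState : Type} [Fintype Proc] [Nonempty Proc]
    (A : Algorithm Proc State Msg) (D : SoSData A)
    (initP : Set PState) (V Vt : Proc → State → PState)
    (hV : IsInterp A initP V)
    (hVt1 : ∀ p, ∀ q ∈ A.init p, Vt p (D.stall p q) = V p q)
    (hVt2 : ∀ p s, s ∉ D.Sd p → Vt p s = V p s)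
    (F : FailurePattern Proc) (H : Proc → ℕ → Set Proc) (I : Proc → State)
    (Φt Φ : ℕ → Step Proc State Msg) (Tt T : ℕ → ℕ)
    (hrunT : ValidRun (SoSAlg A D) Marabout F H I Φt Tt)
    (hdel : IsDeletion (faultyS F) Φt Tt Φ T)
    (hrun0 : ValidRun A Perfect (initialScenario F) H I Φ T)
    (p : Proc) (hp : p ∈ correctS F) (ℓ : ℕ) :
    Vt p (procStateAfter I Φt p ℓ) = V p (procStateAfter I Φ p ℓ) := by
  classical
  obtain ⟨e, he_mono, he_notbad, he_surj, hΦ, hT⟩ := hdel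
  obtain ⟨hTmono, hH, hInit, hInf, hAllowed, hLive, hFd, hNoSpur, hRel, hFirst, hNext⟩ := hrunT
  have hpf : p ∉ faultyS F := fun h => h hp
  -- Lemma A: every step of p in Φt starts and ends in A.Q p
  have lemA : ∀ k, (Φt k).proc = p → (Φt k).st ∈ A.Q p ∧ (Φt k).st' ∈ A.Q p := by
    intro k
    induction k using Nat.strong_induction_on with
    | _ k IH =>
      intro hkp
      -- fd output of the step is faultyS F
      have hfd : (Φt k).fd = faultyS F := by
        rw [hFd k, hkp]
        exact hH (Tt k) p (hkp ▸ hLive k)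
      have hpfd : (Φt k).proc ∉ (Φt k).fd := by rw [hkp, hfd]; exact hpf
      -- the start state is in A.Q p
      have hst : (Φt k).st ∈ A.Q p := by
        by_cases hfs : ∀ j < k, (Φt j).proc ≠ (Φt k).proc
        · rw [hFirst k hfs, hkp]
          exact A.init_sub p (hInit p)
        · push_neg at hfs
          obtain ⟨j₀, hj₀k, hj₀p⟩ := hfs
          set P : ℕ → Prop := fun m => m < k ∧ (Φt m).proc = p with hP
          have hPj₀ : P j₀ := ⟨hj₀k, by rw [← hkp]; exact hj₀p⟩
          set j := Nat.findGreatest P k with hj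
          have hPj : P j := Nat.findGreatest_spec (le_of_lt hj₀k) hPj₀
          have hmax : ∀ m, j < m → m < k → (Φt m).proc ≠ (Φt j).proc := by
            intro m hjm hmk hmp
            have : m ≤ j := Nat.le_findGreatest (le_of_lt hmk) ⟨hmk, by rw [← hPj.2]; exact hmp⟩
            omega
          have hstep := hNext j k hPj.1 (by rw [hkp, hPj.2]) hmax
          rw [hstep]
          exact (IH j hPj.1 hPj.2).2
      refine ⟨hst, ?_⟩
      -- case analysis on the allowed step of the SoS algorithm
      have hall := hAllowed k
      have hnotSd : (Φt k).st ∉ D.Sd (Φt k).proc := by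
        rw [hkp]; exact fun hmem => Set.disjoint_left.mp (D.disj p) hmem hst
      rcases hall with ⟨hA, -⟩ | ⟨-, h2, -⟩ | ⟨h1, -⟩
      · have := (A.allowed_st _ hA).2
        rwa [hkp] at this
      · exact absurd h2 hpfd
      · exact absurd h1 hnotSd
  -- counting lemma: e preserves the number of earlier p-steps
  have hcount : ∀ k, {j | j < e k ∧ (Φt j).proc = p}.ncard
      = {j | j < k ∧ (Φ j).proc = p}.ncard := by
    intro k
    have himg : e '' {j | j < k ∧ (Φ j).proc = p} = {j | j < e k ∧ (Φt j).proc = p} := by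
      ext j'
      constructor
      · rintro ⟨j, ⟨hjk, hjp⟩, rfl⟩
        exact ⟨he_mono hjk, by rw [← hΦ j]; exact hjp⟩
      · rintro ⟨hj'k, hj'p⟩
        have hnb : (Φt j').proc ∉ faultyS F := by rw [hj'p]; exact hpf
        obtain ⟨j, rfl⟩ := he_surj j' hnb
        exact ⟨j, ⟨he_mono.lt_iff_lt.mp hj'k, by rw [hΦ j]; exact hj'p⟩, rfl⟩
    rw [← himg, Set.ncard_image_of_injOn (he_mono.injective.injOn)]
  -- main induction: the two per-process state sequences coincide and stay in A.Q p
  have main : ∀ n, procStateAfter I Φt p n = procStateAfter I Φ p n ∧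
      procStateAfter I Φ p n ∈ A.Q p := by
    intro n
    induction n with
    | zero => exact ⟨rfl, A.init_sub p (hInit p)⟩
    | succ n IH =>
      have hiff : (∃ k, (Φt k).proc = p ∧ {j | j < k ∧ (Φt j).proc = p}.ncard = n)
          ↔ (∃ k, (Φ k).proc = p ∧ {j | j < k ∧ (Φ j).proc = p}.ncard = n) := by
        constructor
        · rintro ⟨k, hkp, hkc⟩
          have hnb : (Φt k).proc ∉ faultyS F := by rw [hkp]; exact hpf
          obtain ⟨j, rfl⟩ := he_surj k hnb
          exact ⟨j, by rw [hΦ j]; exact hkp, by rw [← hcount j]; exact hkc⟩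
        · rintro ⟨k, hkp, hkc⟩
          exact ⟨e k, by rw [← hΦ k]; exact hkp, by rw [hcount k]; exact hkc⟩
      by_cases hpos : ∃ k, (Φ k).proc = p ∧ {j | j < k ∧ (Φ j).proc = p}.ncard = n
      · have hpost := hiff.mpr hpos
        have hk := hpos.choose_spec
        have hkt := hpost.choose_spec
        -- e (hpos.choose) also witnesses hpost, hence equals hpost.choose
        have hek : (Φt (e hpos.choose)).proc = p := by rw [← hΦ]; exact hk.1
        have hekc : {j | j < e hpos.choose ∧ (Φt j).proc = p}.ncard = n := by
          rw [hcount]; exact hk.2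
        have heq : hpost.choose = e hpos.choose :=
          ncard_step_unique Φt p hkt.1 hek (by rw [hkt.2, hekc])
        rw [procStateAfter, procStateAfter, dif_pos hpost, dif_pos hpos, heq, ← hΦ]
        refine ⟨rfl, ?_⟩
        have := (lemA (e hpos.choose) hek).2
        rwa [← hΦ] at this
      · have hneg := hiff.not.mpr hpos
        rw [procStateAfter, procStateAfter, dif_neg hneg, dif_neg hpos]
        exact IH
  obtain ⟨heqst, hQ⟩ := main ℓ
  rw [heqst, hVt2 p _ (fun hmem => Set.disjoint_left.mp (D.disj p) hmem hQ)]

end FDT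
end

section
/- Let A be an algorithm, Ã = 𝔉_SoS(A), and (V_i) an interpretation for A; define (Ṽ_i) for Ã by Ṽ_i(s) = V_i(stall_i⁻¹(s)) for s ∈ S†_i and Ṽ_i(s) = V_i(s) for all other states s. Suppose R̃ = ⟨F, H, I, Φ̃, T̃⟩ is a valid run of Ã using the Marabout failure detector ℳ and R⁰ = ⟨F⁰, H, I, Φ, T⟩ is a valid run of A using the perfect failure detector 𝒫, where F⁰ is the initial crash scenario of F and Φ, T are obtained from Φ̃, T̃ by deleting every entry corresponding to a step of a process in faulty(F). Then for every process p_i ∈ faulty(F) and every ℓ ≥ 0, Ṽ_i(γ_i(I, Φ̃, ℓ)) = V_i(γ_i(I, Φ, ℓ)). -/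
namespace FDT

open Classical

variable {Proc State Msg PState : Type}

/-- With `Ṽ` derived from interpretation `V` via the stall bijections,
for every faulty process `p` and every `ℓ`, `Ṽ_p(γ_p(I,Φ̃,ℓ)) = V_p(γ_p(I,Φ,ℓ))`. -/
theorem sos_interp_eq_of_faulty {Proc State Msg PState : Type} [Fintype Proc] [Nonempty Proc]
    (A : Algorithm Proc State Msg) (D : SoSData A)
    (initP : Set PState) (V Vt : Proc → State → PState)
    (hV : IsInterp A initP V)
    (hVt1 : ∀ p, ∀ q ∈ A.init p, Vt p (D.stall p q) = V p q)
    (hVt2 : ∀ p s, s ∉ D.Sd p → Vt p s = V p s)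
    (F : FailurePattern Proc) (H : Proc → ℕ → Set Proc) (I : Proc → State)
    (Φt Φ : ℕ → Step Proc State Msg) (Tt T : ℕ → ℕ)
    (hrunT : ValidRun (SoSAlg A D) Marabout F H I Φt Tt)
    (hdel : IsDeletion (faultyS F) Φt Tt Φ T)
    (hrun0 : ValidRun A Perfect (initialScenario F) H I Φ T)
    (p : Proc) (hp : p ∈ faultyS F) (ℓ : ℕ) :
    Vt p (procStateAfter I Φt p ℓ) = V p (procStateAfter I Φ p ℓ) := by
  classical
  obtain ⟨hT, hH, hI, hinf, hall, hlive, hfd, hspur, hrel, hfirst, hnext⟩ := hrunT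
  obtain ⟨e, he, hbad, -, hΦ, -⟩ := hdel
  have hIp : I p ∈ A.init p := hI p
  -- every step of the faulty process p in Φt ends in the stall state
  have key : ∀ k, (Φt k).proc = p →
      (Φt k).st' = D.stall p (I p) ∧
        ((Φt k).st = I p ∨ (Φt k).st = D.stall p (I p)) := by
    intro k
    induction k using Nat.strong_induction_on with
    | _ k IH =>
      intro hk
      have hfdk : (Φt k).proc ∈ (Φt k).fd := by
        rw [hfd k, hk, hH (Tt k) p (hk ▸ hlive k)]
        exact hp
      have hst : (Φt k).st = I p ∨ (Φt k).st = D.stall p (I p) := by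
        by_cases hfirstk : ∀ j < k, (Φt j).proc ≠ (Φt k).proc
        · left; rw [hfirst k hfirstk, hk]
        · push_neg at hfirstk
          obtain ⟨j, hjk, hjp⟩ := hfirstk
          set P := fun i => i < k ∧ (Φt i).proc = (Φt k).proc with hP
          obtain ⟨hmk, hmp⟩ : P (Nat.findGreatest P k) :=
            Nat.findGreatest_spec (P := P) hjk.le ⟨hjk, hjp⟩
          set m := Nat.findGreatest P k with hm
          have hmax : ∀ i, P i → i ≤ m := fun i hi => Nat.le_findGreatest hi.1.le hi
          right
          have hbetween : ∀ i, m < i → i < k → (Φt i).proc ≠ (Φt m).proc := by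
            intro i hmi hik hcon
            exact absurd (hmax i ⟨hik, hmp ▸ hcon⟩) (Nat.not_le.mpr hmi)
          have := hnext m k hmk hmp.symm hbetween
          rw [this, (IH m hmk (hmp.trans hk)).1]
      have hSd : D.stall p (I p) ∈ D.Sd p := D.stall_maps p _ hIp
      have hQ : I p ∈ A.Q p := A.init_sub p hIp
      have halk := hall k
      simp only [SoSAlg, Set.mem_setOf_eq] at halk
      rcases hst with hst | hst
      · rcases halk with ⟨hA, hn⟩ | ⟨h1, h2, h3, h4, h5⟩ | ⟨h1, h2, h3, h4⟩
        · exact absurd ⟨by rw [hst, hk]; exact hIp, hfdk⟩ hn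
        · exact ⟨by rw [h3, hk, hst], Or.inl hst⟩
        · exact absurd (by rw [hst, hk] at h1; exact h1)
            (Set.disjoint_right.mp (D.disj p) hQ)
      · rcases halk with ⟨hA, hn⟩ | ⟨h1, h2, h3, h4, h5⟩ | ⟨h1, h2, h3, h4⟩
        · exact absurd ((A.allowed_st _ hA).1)
            (by rw [hst, hk]; exact Set.disjoint_left.mp (D.disj p) hSd)
        · exact absurd (A.init_sub _ h1)
            (by rw [hst, hk]; exact Set.disjoint_left.mp (D.disj p) hSd)
        · exact ⟨by rw [h2, hst], Or.inr hst⟩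
  -- the state of p along Φt is either I p or the stall state
  have hΦt : ∀ n, procStateAfter I Φt p n = I p ∨
      procStateAfter I Φt p n = D.stall p (I p) := by
    intro n
    induction n with
    | zero => exact Or.inl rfl
    | succ n ih =>
      rw [procStateAfter]
      split
      · next h => exact Or.inr (key h.choose h.choose_spec.1).1
      · exact ih
  -- p takes no step in Φ, so its state is always I p
  have hΦside : ∀ n, procStateAfter I Φ p n = I p := by
    intro n
    induction n with
    | zero => rfl
    | succ n ih =>
      rw [procStateAfter]
      split
      · next h =>
        exact absurd hp (by rw [← h.choose_spec.1, hΦ h.choose]; exact hbad h.choose)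
      · exact ih
  rw [hΦside ℓ]
  rcases hΦt ℓ with h | h
  · rw [h]
    exact hVt2 p (I p) (fun hmem =>
      Set.disjoint_left.mp (D.disj p) hmem (A.init_sub p hIp))
  · rw [h]
    exact hVt1 p (I p) hIp

end FDT
end

section
/- If an algorithm A solves a time-free problem P using the perfect failure detector 𝒫, then the algorithm Ã = 𝔉_SoS(A) obtained by the Stall-on-Suspect transformation solves P using the Marabout failure detector ℳ. -/
namespace FDT

open Classical

variable {Proc State Msg PState : Type}

section SosAux

variable {Proc State Msg PState : Type}

lemma FP_mono (F : FailurePattern Proc) : ∀ {a b : ℕ}, a ≤ b → F.F a ⊆ F.F b := by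
  intro a b h
  induction b, h using Nat.le_induction with
  | base => exact subset_rfl
  | succ b _ ih => exact ih.trans (F.mono b)

lemma configAt_no_step (I : Proc → State) (Φ : ℕ → Step Proc State Msg) {p : Proc} {a : ℕ} :
    ∀ {b : ℕ}, a ≤ b → (∀ j, a ≤ j → j < b → (Φ j).proc ≠ p) →
      configAt I Φ b p = configAt I Φ a p := by
  intro b hab
  induction b, hab using Nat.le_induction with
  | base => intro _; rfl
  | succ b hb ih =>
    intro hno
    have h1 : (Φ b).proc ≠ p := hno b hb (Nat.lt_succ_self b)
    have h2 : configAt I Φ (b + 1) p = configAt I Φ b p := by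
      simp [configAt, h1]
    rw [h2]
    exact ih (fun j hj hj' => hno j hj (hj'.trans (Nat.lt_succ_self b)))

lemma prev_step (I : Proc → State) (Φ : ℕ → Step Proc State Msg)
    (hfirst : ∀ ℓ, (∀ k < ℓ, (Φ k).proc ≠ (Φ ℓ).proc) → (Φ ℓ).st = I (Φ ℓ).proc)
    (hcont : ∀ ℓ k, ℓ < k → (Φ k).proc = (Φ ℓ).proc →
      (∀ j, ℓ < j → j < k → (Φ j).proc ≠ (Φ ℓ).proc) → (Φ k).st = (Φ ℓ).st')
    (m : ℕ) :
    ((∀ k < m, (Φ k).proc ≠ (Φ m).proc) ∧ (Φ m).st = I (Φ m).proc) ∨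
    (∃ k < m, (Φ k).proc = (Φ m).proc ∧ (Φ m).st = (Φ k).st' ∧
      ∀ j, k < j → j < m → (Φ j).proc ≠ (Φ m).proc) := by
  classical
  by_cases hex : ∃ k, k < m ∧ (Φ k).proc = (Φ m).proc
  · right
    set s : Finset ℕ := (Finset.range m).filter (fun k => (Φ k).proc = (Φ m).proc) with hs
    have hsne : s.Nonempty := by
      obtain ⟨k, hk1, hk2⟩ := hex
      exact ⟨k, by simp [hs, Finset.mem_filter, Finset.mem_range, hk1, hk2]⟩
    set k := s.max' hsne with hk
    have hkmem := s.max'_mem hsne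
    simp only [hs, Finset.mem_filter, Finset.mem_range] at hkmem
    have hbet : ∀ j, k < j → j < m → (Φ j).proc ≠ (Φ m).proc := by
      intro j hj1 hj2 hjp
      have : j ∈ s := by simp [hs, Finset.mem_filter, Finset.mem_range, hj2, hjp]
      exact absurd (s.le_max' j this) (not_le.mpr hj1)
    refine ⟨k, hkmem.1, hkmem.2, ?_, hbet⟩
    have := hcont k m hkmem.1 hkmem.2.symm (fun j hj1 hj2 hjp => hbet j hj1 hj2 (hjp.trans hkmem.2))
    exact this
  · left
    push_neg at hex
    exact ⟨hex, hfirst m hex⟩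

lemma state_eq (I : Proc → State) (Φ : ℕ → Step Proc State Msg)
    (hfirst : ∀ ℓ, (∀ k < ℓ, (Φ k).proc ≠ (Φ ℓ).proc) → (Φ ℓ).st = I (Φ ℓ).proc)
    (hcont : ∀ ℓ k, ℓ < k → (Φ k).proc = (Φ ℓ).proc →
      (∀ j, ℓ < j → j < k → (Φ j).proc ≠ (Φ ℓ).proc) → (Φ k).st = (Φ ℓ).st')
    (m : ℕ) : (Φ m).st = configAt I Φ m ((Φ m).proc) := by
  rcases prev_step I Φ hfirst hcont m with ⟨hno, hst⟩ | ⟨k, hkm, hpk, hst, hbet⟩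
  · rw [hst, configAt_no_step I Φ (Nat.zero_le m) (fun j _ hj => hno j hj)]
    rfl
  · rw [hst, configAt_no_step I Φ (show k + 1 ≤ m from hkm)
      (fun j hj hj' => hbet j (Nat.lt_of_succ_le hj) hj')]
    simp [configAt, hpk]

lemma stutter_count {Proc PState : Type} (w : ℕ → Proc → PState) :
    ∀ (c : ℕ) (g : ℕ → ℕ), g 0 = 0 →
      (∀ m, g (m + 1) = g m ∨ g (m + 1) = g m + 1) →
      {m | g (m + 1) = g m}.Finite → {m | g (m + 1) = g m}.ncard ≤ c →
      Stutter w (fun m => w (g m)) := by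
  have hid : ∀ (g : ℕ → ℕ), g 0 = 0 → (∀ m, g (m + 1) = g m ∨ g (m + 1) = g m + 1) →
      {m | g (m + 1) = g m} = ∅ → Stutter w (fun m => w (g m)) := by
    intro g h0 hdi hemp
    have hgm : ∀ m, g m = m := by
      intro m
      induction m with
      | zero => exact h0
      | succ n ih =>
        rcases hdi n with h | h
        · exact absurd (show n ∈ {m | g (m + 1) = g m} from h)
            (by rw [hemp]; exact Set.notMem_empty n)
        · rw [h, ih]
    have heq : (fun m => w (g m)) = w := funext fun m => by rw [hgm m]
    rw [heq]
    exact Relation.ReflTransGen.refl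
  intro c
  induction c with
  | zero =>
    intro g h0 hdi hfin hcard
    exact hid g h0 hdi ((Set.ncard_eq_zero hfin).mp (Nat.le_zero.mp hcard))
  | succ c ihc =>
    intro g h0 hdi hfin hcard
    by_cases hle : {m | g (m + 1) = g m}.ncard ≤ c
    · exact ihc g h0 hdi hfin hle
    · have hne : {m | g (m + 1) = g m}.Nonempty :=
        Set.nonempty_of_ncard_ne_zero (by omega)
      obtain ⟨n, hn⟩ := hne
      have hn' : g (n + 1) = g n := hn
      set g' : ℕ → ℕ := fun m => if m ≤ n then g m else g (m + 1) with hg'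
      have hg0 : g' 0 = 0 := by simp [hg', h0]
      have hg'le : ∀ m, m ≤ n → g' m = g m := by intro m hm; simp [hg', hm]
      have hg'gt : ∀ m, ¬ m ≤ n → g' m = g (m + 1) := by intro m hm; simp [hg', hm]
      have hg'ge : ∀ m, n ≤ m → g' m = g (m + 1) := by
        intro m hm
        by_cases hEq : m = n
        · subst hEq
          rw [hg'le m le_rfl, hn']
        · exact hg'gt m (by omega)
      have hdi' : ∀ m, g' (m + 1) = g' m ∨ g' (m + 1) = g' m + 1 := by
        intro m
        by_cases h1 : m + 1 ≤ n
        · rw [hg'le (m + 1) h1, hg'le m (by omega)]; exact hdi m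
        · by_cases h2 : m ≤ n
          · rw [hg'gt (m + 1) h1, hg'ge m (by omega)]
            exact hdi (m + 1)
          · rw [hg'gt (m + 1) h1, hg'gt m h2]
            exact hdi (m + 1)
      set ψ : ℕ → ℕ := fun m => if m < n then m else m + 1 with hψ
      have hψinj : Function.Injective ψ := by
        intro a b hab
        simp only [hψ] at hab
        split_ifs at hab <;> omega
      have hmap : ∀ m, g' (m + 1) = g' m → ψ m ∈ {m | g (m + 1) = g m} \ {n} := by
        intro m hm
        by_cases h : m < n
        · have hpsi : ψ m = m := by simp [hψ, h]
          rw [hpsi]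
          refine ⟨?_, by simp only [Set.mem_singleton_iff]; omega⟩
          rwa [hg'le (m + 1) (by omega), hg'le m (by omega)] at hm
        · have hpsi : ψ m = m + 1 := by simp [hψ, h]
          rw [hpsi]
          refine ⟨?_, by simp only [Set.mem_singleton_iff]; omega⟩
          rw [hg'gt (m + 1) (by omega), hg'ge m (by omega)] at hm
          exact hm
      have hsub : {m | g' (m + 1) = g' m} ⊆ ψ ⁻¹' ({m | g (m + 1) = g m} \ {n}) :=
        fun m hm => hmap m hm
      have hfin' : {m | g' (m + 1) = g' m}.Finite :=
        Set.Finite.subset (Set.Finite.preimage hψinj.injOn (hfin.subset Set.diff_subset)) hsub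
      have hcard' : {m | g' (m + 1) = g' m}.ncard ≤ c := by
        have h1 : {m | g' (m + 1) = g' m}.ncard = (ψ '' {m | g' (m + 1) = g' m}).ncard :=
          (Set.ncard_image_of_injective _ hψinj).symm
        have h2 : (ψ '' {m | g' (m + 1) = g' m}).ncard ≤ ({m | g (m + 1) = g m} \ {n}).ncard := by
          apply Set.ncard_le_ncard ?_ (hfin.subset Set.diff_subset)
          rintro x ⟨m, hm, rfl⟩
          exact hmap m hm
        have h3 : ({m | g (m + 1) = g m} \ {n}).ncard < {m | g (m + 1) = g m}.ncard :=
          Set.ncard_diff_singleton_lt_of_mem hn hfin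
        omega
      have ih := ihc g' hg0 hdi' hfin' hcard'
      refine Relation.ReflTransGen.tail ih ⟨n, ?_, ?_, ?_⟩
      · intro k hk
        show w (g k) = w (g' k)
        rw [hg'le k hk]
      · intro p
        left
        show w (g (n + 1)) p = w (g' n) p
        rw [hn', hg'le n le_rfl]
      · intro k hk
        show w (g (k + 1)) = w (g' k)
        rw [hg'ge k (by omega)]

end SosAux
/-- If `A` solves a time-free problem `P` using the perfect detector `𝒫`,
then `Ã = 𝔉_SoS(A)` solves `P` using the Marabout detector `ℳ`. -/
theorem sos_solves {Proc State Msg PState : Type} [Fintype Proc] [Nonempty Proc]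
    (A : Algorithm Proc State Msg) (D : SoSData A)
    (initP : Set PState) (P : TimeFreeProblem Proc PState initP)
    (h : Solves A Perfect P.pred initP) :
    Solves (SoSAlg A D) Marabout P.pred initP := by
  classical
  obtain ⟨V, hV, hsolve⟩ := h
  set Vt : Proc → State → PState := fun p s =>
    if hs : s ∈ D.Sd p then V p (Classical.choose (D.stall_surj p hs)) else V p s with hVtdef
  have Vt_Q : ∀ p s, s ∈ A.Q p → Vt p s = V p s := by
    intro p s hs
    have hns : s ∉ D.Sd p := fun h' => Set.disjoint_left.mp (D.disj p) h' hs
    simp [hVtdef, hns]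
  have Vt_stall : ∀ p q, q ∈ A.init p → Vt p (D.stall p q) = V p q := by
    intro p q hq
    have hmem : D.stall p q ∈ D.Sd p := D.stall_maps p q hq
    have hspec := Classical.choose_spec (D.stall_surj p hmem)
    have hcq : Classical.choose (D.stall_surj p hmem) = q :=
      D.stall_inj p hspec.1 hq hspec.2
    simp only [hVtdef]
    rw [dif_pos hmem, hcq]
  refine ⟨Vt, ⟨?_, ?_⟩, ?_⟩
  · intro p
    apply Set.eq_univ_of_univ_subset
    rw [← hV.1 p]
    rintro x ⟨s, hs, rfl⟩
    exact ⟨s, Set.mem_union_left _ hs, Vt_Q p s hs⟩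
  · intro p
    have hc : ∀ s ∈ A.init p, Vt p s = V p s := fun s hs => Vt_Q p s (A.init_sub p hs)
    calc Vt p '' (SoSAlg A D).init p = V p '' A.init p := Set.image_congr hc
    _ = initP := hV.2 p
  intro F H I Φ T hR
  obtain ⟨hT, hH, hI, hinf, hall, hlive, hfd, hnospur, hrel, hfirst, hcont⟩ := hR
  have hTge : ∀ ℓ : ℕ, ℓ ≤ T ℓ := fun ℓ => hT.le_apply
  have hfdm : ∀ m, (Φ m).fd = faultyS F := fun m => (hfd m).trans (hH (T m) _ (hlive m))
  have hallE : ∀ m, (Φ m ∈ A.allowed ∧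
        ¬((Φ m).st ∈ A.init (Φ m).proc ∧ (Φ m).proc ∈ (Φ m).fd)) ∨
      ((Φ m).st ∈ A.init (Φ m).proc ∧ (Φ m).proc ∈ (Φ m).fd ∧
        (Φ m).st' = D.stall (Φ m).proc (Φ m).st ∧ (Φ m).recv = none ∧ (Φ m).send = none) ∨
      ((Φ m).st ∈ D.Sd (Φ m).proc ∧ (Φ m).st' = (Φ m).st ∧
        (Φ m).recv = none ∧ (Φ m).send = none) := fun m => hall m
  have hcf : ∀ p : Proc, p ∈ correctS F → p ∉ faultyS F := fun p hp hq => hq hp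
  -- Claim B: correct processes take A-steps; faulty processes stall silently.
  have claimB : ∀ m : ℕ,
      ((Φ m).proc ∈ correctS F → Φ m ∈ A.allowed) ∧
      ((Φ m).proc ∉ correctS F → (Φ m).recv = none ∧ (Φ m).send = none ∧
        (Φ m).st' ∈ D.Sd (Φ m).proc ∧
        Vt (Φ m).proc (Φ m).st' = Vt (Φ m).proc (Φ m).st) := by
    intro m
    induction m using Nat.strong_induction_on with
    | _ m IH =>
    rcases prev_step I Φ hfirst hcont m with ⟨hno, hst⟩ | ⟨k, hkm, hpk, hst, hbet⟩
    · have hinit : (Φ m).st ∈ A.init (Φ m).proc := hst ▸ hI _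
      have hQ : (Φ m).st ∈ A.Q (Φ m).proc := A.init_sub _ hinit
      have hnSd : (Φ m).st ∉ D.Sd (Φ m).proc :=
        fun h' => Set.disjoint_left.mp (D.disj _) h' hQ
      constructor
      · intro hc
        have hnf : (Φ m).proc ∉ (Φ m).fd := by rw [hfdm m]; exact hcf _ hc
        rcases hallE m with ⟨h1, _⟩ | ⟨_, h2, _⟩ | ⟨h1, _⟩
        · exact h1
        · exact absurd h2 hnf
        · exact absurd h1 hnSd
      · intro hc
        have hf : (Φ m).proc ∈ (Φ m).fd := by rw [hfdm m]; exact hc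
        rcases hallE m with ⟨_, hn⟩ | ⟨_, _, h3, h4, h5⟩ | ⟨h1, _⟩
        · exact absurd ⟨hinit, hf⟩ hn
        · refine ⟨h4, h5, h3 ▸ D.stall_maps _ _ hinit, ?_⟩
          rw [h3, Vt_stall _ _ hinit, Vt_Q _ _ hQ]
        · exact absurd h1 hnSd
    · have hIHk := IH k hkm
      constructor
      · intro hc
        have hck : (Φ k).proc ∈ correctS F := hpk ▸ hc
        have hQ : (Φ m).st ∈ A.Q (Φ m).proc := by
          rw [hst, ← hpk]
          exact (A.allowed_st _ (hIHk.1 hck)).2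
        have hnSd : (Φ m).st ∉ D.Sd (Φ m).proc :=
          fun h' => Set.disjoint_left.mp (D.disj _) h' hQ
        have hnf : (Φ m).proc ∉ (Φ m).fd := by rw [hfdm m]; exact hcf _ hc
        rcases hallE m with ⟨h1, _⟩ | ⟨_, h2, _⟩ | ⟨h1, _⟩
        · exact h1
        · exact absurd h2 hnf
        · exact absurd h1 hnSd
      · intro hc
        have hck : (Φ k).proc ∉ correctS F := hpk ▸ hc
        have hSd : (Φ m).st ∈ D.Sd (Φ m).proc := by
          rw [hst, ← hpk]
          exact (hIHk.2 hck).2.2.1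
        have hnQ : (Φ m).st ∉ A.Q (Φ m).proc :=
          fun h' => Set.disjoint_left.mp (D.disj _) hSd h'
        rcases hallE m with ⟨h1, _⟩ | ⟨h1, _⟩ | ⟨h1, h2, h3, h4⟩
        · exact absurd (A.allowed_st _ h1).1 hnQ
        · exact absurd (A.init_sub _ h1) hnQ
        · exact ⟨h3, h4, h2 ▸ hSd, by rw [h2]⟩
  -- A bound after which all steps belong to correct processes.
  have hcrash : ∀ p : Proc, p ∉ correctS F → ∃ t, p ∈ F.F t := by
    intro p hp
    by_contra h'
    push_neg at h'
    exact hp h'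
  set ct : Proc → ℕ := fun p => if hp : p ∈ correctS F then 0 else (hcrash p hp).choose
    with hctdef
  set N : ℕ := Finset.univ.sup ct with hNdef
  have hbigN : ∀ m, N ≤ m → (Φ m).proc ∈ correctS F := by
    intro m hm
    by_contra hq
    have h1 : (Φ m).proc ∈ F.F (ct (Φ m).proc) := by
      simp only [hctdef]
      rw [dif_neg hq]
      exact (hcrash _ hq).choose_spec
    have h2 : ct (Φ m).proc ≤ T m :=
      le_trans (le_trans (Finset.le_sup (Finset.mem_univ _)) hm) (hTge m)
    exact hlive m (FP_mono F h2 h1)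
  set pc : ℕ → Prop := fun m => (Φ m).proc ∈ correctS F with hpcdef
  have hpcinf : (setOf pc).Infinite :=
    Set.Infinite.mono (fun m hm => hbigN m hm) (Set.Ici_infinite N)
  set e : ℕ → ℕ := fun ℓ => Nat.nth pc ℓ with hedef
  have hemem : ∀ ℓ, (Φ (e ℓ)).proc ∈ correctS F := fun ℓ => Nat.nth_mem_of_infinite hpcinf ℓ
  have hemono : StrictMono e := Nat.nth_strictMono hpcinf
  have hesurj : ∀ m, pc m → e (Nat.count pc m) = m := fun m hm => Nat.nth_count hm
  set Φ' : ℕ → Step Proc State Msg := fun ℓ => Φ (e ℓ) with hPhi'def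
  set T' : ℕ → ℕ := fun ℓ => T (e ℓ) with hT'def
  have hconfFQ : ∀ ℓ, Φ' ℓ ∈ A.allowed := fun ℓ => (claimB (e ℓ)).1 (hemem ℓ)
  have hconfQ : ∀ k p, configAt I Φ' k p ∈ A.Q p := by
    intro k
    induction k with
    | zero => intro p; exact A.init_sub _ (hI p)
    | succ k ih =>
      intro p
      by_cases hp : (Φ' k).proc = p
      · have h2 := (A.allowed_st _ (hconfFQ k)).2
        simp only [configAt, if_pos hp]
        exact hp ▸ h2
      · simp only [configAt, if_neg hp]
        exact ih p
  -- configuration correspondence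
  have hCC : ∀ m,
      (∀ p, p ∈ correctS F → configAt I Φ m p = configAt I Φ' (Nat.count pc m) p) ∧
      (∀ p, Vt p (configAt I Φ m p) = Vt p (configAt I Φ' (Nat.count pc m) p)) := by
    intro m
    induction m with
    | zero => exact ⟨fun p _ => rfl, fun p => rfl⟩
    | succ m ih =>
      by_cases hq : pc m
      · have hcount : Nat.count pc (m + 1) = Nat.count pc m + 1 := by
          rw [Nat.count_succ, if_pos hq]
        have hPhi : Φ' (Nat.count pc m) = Φ m := by
          simp only [hPhi'def]
          rw [hesurj m hq]
        rw [hcount]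
        constructor
        · intro p hp
          by_cases hpp : (Φ m).proc = p
          · simp only [configAt, hPhi, if_pos hpp]
          · simp only [configAt, hPhi, if_neg hpp]
            exact ih.1 p hp
        · intro p
          by_cases hpp : (Φ m).proc = p
          · simp only [configAt, hPhi, if_pos hpp]
          · simp only [configAt, hPhi, if_neg hpp]
            exact ih.2 p
      · have hcount : Nat.count pc (m + 1) = Nat.count pc m := by
          simp [Nat.count_succ, hq]
        rw [hcount]
        have hqf : (Φ m).proc ∉ correctS F := hq
        constructor
        · intro p hp
          have hpp : (Φ m).proc ≠ p := fun hh => hqf (hh ▸ hp)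
          simp only [configAt, if_neg hpp]
          exact ih.1 p hp
        · intro p
          by_cases hpp : (Φ m).proc = p
          · subst hpp
            simp only [configAt, if_pos rfl]
            calc Vt (Φ m).proc (Φ m).st'
                = Vt (Φ m).proc (Φ m).st := (claimB m).2 hqf |>.2.2.2
              _ = Vt (Φ m).proc (configAt I Φ m (Φ m).proc) := by
                  rw [state_eq I Φ hfirst hcont m]
              _ = Vt (Φ m).proc (configAt I Φ' (Nat.count pc m) (Φ m).proc) := ih.2 _
          · simp only [configAt, if_neg hpp]
            exact ih.2 p
  -- the initial-crash failure pattern and constant history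
  set F0 : FailurePattern Proc := initialScenario F with hF0def
  set H0 : Proc → ℕ → Set Proc := fun _ _ => faultyS F with hH0def
  have hcorrEq : correctS F0 = correctS F := by
    ext p
    simp only [hF0def, correctS, initialScenario, Set.mem_setOf_eq, faultyS,
      Set.mem_compl_iff, not_not]
    exact ⟨fun hh => hh 0, fun hh _ => hh⟩
  have hfautEq : faultyS F0 = faultyS F := by
    simp only [faultyS, hcorrEq]
  have hVR : ValidRun A Perfect F0 H0 I Φ' T' := by
    refine ⟨hT.comp hemono, ⟨?_, ?_⟩, hI, ?_, hconfFQ, ?_, ?_, ?_, ?_, ?_, ?_⟩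
    · intro q hq p _
      exact ⟨0, fun t _ => show q ∈ faultyS F from hfautEq ▸ hq⟩
    · intro t p _ q hqt
      exact hqt
    · intro p hp n
      have hp' : p ∈ correctS F := hcorrEq ▸ hp
      obtain ⟨k, hk1, hk2⟩ := hinf p hp' (e n + 1)
      have hpck : pc k := by
        show (Φ k).proc ∈ correctS F
        rw [hk2]; exact hp'
      refine ⟨Nat.count pc k, ?_, ?_⟩
      · have hlt : e n < e (Nat.count pc k) := by
          rw [hesurj k hpck]; omega
        exact le_of_lt (hemono.lt_iff_lt.mp hlt)
      · show (Φ (e (Nat.count pc k))).proc = p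
        rw [hesurj k hpck]; exact hk2
    · intro ℓ
      show (Φ' ℓ).proc ∉ faultyS F
      exact hcf _ (hemem ℓ)
    · intro ℓ
      exact hfdm (e ℓ)
    · intro ℓ q m hm
      obtain ⟨k, hk, hkq, hks⟩ := hnospur (e ℓ) q m hm
      have hqk : pc k := by
        show (Φ k).proc ∈ correctS F
        by_contra hqk
        have := ((claimB k).2 hqk).2.1
        rw [this] at hks
        cases hks
      refine ⟨Nat.count pc k, ?_, ?_, ?_⟩
      · have hlt : e (Nat.count pc k) < e ℓ := by rw [hesurj k hqk]; exact hk
        exact hemono.lt_iff_lt.mp hlt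
      · show (Φ (e (Nat.count pc k))).proc = q
        rw [hesurj k hqk]; exact hkq
      · show (Φ (e (Nat.count pc k))).send = some ((Φ' ℓ).proc, m)
        rw [hesurj k hqk]; exact hks
    · intro ℓ q m hm
      obtain ⟨huniq, hcorr⟩ := hrel (e ℓ) q m hm
      constructor
      · intro k k' hk hk' hq1 hr1 hq2 hr2
        exact hemono.injective
          (huniq (e k) (e k') (hemono hk) (hemono hk') hq1 hr1 hq2 hr2)
      · intro hqc
        have hqc' : q ∈ correctS F := hcorrEq ▸ hqc
        obtain ⟨k, hk, hkq, hkr⟩ := hcorr hqc'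
        have hqk : pc k := by
          show (Φ k).proc ∈ correctS F
          rw [hkq]; exact hqc'
        refine ⟨Nat.count pc k, ?_, ?_, ?_⟩
        · have hlt : e ℓ < e (Nat.count pc k) := by rw [hesurj k hqk]; exact hk
          exact hemono.lt_iff_lt.mp hlt
        · show (Φ (e (Nat.count pc k))).proc = q
          rw [hesurj k hqk]; exact hkq
        · show (Φ (e (Nat.count pc k))).recv = some ((Φ' ℓ).proc, m)
          rw [hesurj k hqk]; exact hkr
    · intro ℓ hfl
      apply hfirst (e ℓ)
      intro k hk hkp
      have hqk : pc k := by
        show (Φ k).proc ∈ correctS F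
        rw [hkp]; exact hemem ℓ
      have hlt : Nat.count pc k < ℓ := by
        apply hemono.lt_iff_lt.mp
        rw [hesurj k hqk]; exact hk
      refine hfl (Nat.count pc k) hlt ?_
      show (Φ (e (Nat.count pc k))).proc = (Φ (e ℓ)).proc
      rw [hesurj k hqk]; exact hkp
    · intro ℓ k hlk hpk hbet
      apply hcont (e ℓ) (e k) (hemono hlk) hpk
      intro j hj1 hj2 hjp
      have hqj : pc j := by
        show (Φ j).proc ∈ correctS F
        rw [hjp]; exact hemem ℓ
      have h1 : ℓ < Nat.count pc j := by
        apply hemono.lt_iff_lt.mp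
        rw [hesurj j hqj]; exact hj1
      have h2 : Nat.count pc j < k := by
        apply hemono.lt_iff_lt.mp
        rw [hesurj j hqj]; exact hj2
      refine hbet (Nat.count pc j) h1 h2 ?_
      show (Φ (e (Nat.count pc j))).proc = (Φ (e ℓ)).proc
      rw [hesurj j hqj]; exact hjp
  have h1 : P.pred (interpRun V I Φ') F0 := hsolve F0 H0 I Φ' T' hVR
  have hw0 : ∀ p, interpRun V I Φ' 0 p ∈ initP := by
    intro p
    have heq : interpRun V I Φ' 0 p = V p (I p) := rfl
    rw [heq, ← hV.2 p]
    exact Set.mem_image_of_mem _ (hI p)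
  have h2 : P.pred (interpRun V I Φ') F := (P.crashIndep _ F0 F hw0 hcorrEq).mp h1
  have hflatsub : {m | Nat.count pc (m + 1) = Nat.count pc m} ⊆ Set.Iio N := by
    intro m hm
    simp only [Set.mem_setOf_eq, Nat.count_succ] at hm
    by_contra h'
    simp only [Set.mem_Iio, not_lt] at h'
    have hc : pc m := hbigN m h'
    rw [if_pos hc] at hm
    omega
  have hflatfin : {m | Nat.count pc (m + 1) = Nat.count pc m}.Finite :=
    (Set.finite_Iio N).subset hflatsub
  have hstut : Stutter (interpRun V I Φ') (fun m => interpRun V I Φ' (Nat.count pc m)) := by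
    apply stutter_count (interpRun V I Φ')
      ({m | Nat.count pc (m + 1) = Nat.count pc m}.ncard) (Nat.count pc)
      (Nat.count_zero pc) ?_ hflatfin le_rfl
    intro m
    rw [Nat.count_succ]
    by_cases hc : pc m
    · simp [hc]
    · simp [hc]
  have h3 : P.pred (fun m => interpRun V I Φ' (Nat.count pc m)) F :=
    (P.stutterInv _ _ F hw0 hstut).mp h2
  have hfin : interpRun Vt I Φ = fun m => interpRun V I Φ' (Nat.count pc m) := by
    funext m p
    show Vt p (configAt I Φ m p) = V p (configAt I Φ' (Nat.count pc m) p)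
    rw [(hCC m).2 p, Vt_Q p _ (hconfQ _ p)]
  rw [hfin]
  exact h3

end FDT
end
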